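/- For any irrational α there are infinitely many relabeling times; i.e., infinitely many N for which the points {0α},...,{(N-1)α} determine exactly two distinct cyclic gap lengths. -/

import Mathlib

/-!
Choose `a, b > 0` such that `{aα}` is the least and `{bα}` the greatest of the values `{nα}`,
`0 < n < a + b`. Then among `{0α}, …, {(a+b-1)α}` the point `{mα}` is followed by `{(m+a)α}`,
at distance `{aα}`, when `m < b`, and by `{(m-b)α}`, at distance `1 - {bα}`, when `m ≥ b`; these two
lengths differ since `{(a+b)α} ≠ 0`. Such pairs exist with `a + b` arbitrarily large: if `a` and `b`
are the minimiser and maximiser of `{nα}` over `0 < n < N`, then `a + b ≥ N`, and comparing `{nα}`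
with `{(n-a)α}` and `{(n-b)α}` shows that they stay extreme up to `a + b`.
-/

/-- The cyclic gap after the point `{m α}` among the points `{0α}, …, {(N-1)α}` on ℝ/ℤ:
the infimum of positive circular distances from `{m α}` to the other points. -/
noncomputable def gapAt (α : ℝ) (N : ℕ) (m : ℕ) : ℝ :=
  sInf {d : ℝ | 0 < d ∧ ∃ m' : ℕ, m' < N ∧ Int.fract ((m' : ℝ) * α - (m : ℝ) * α) = d}

open Classical in
/-- The set of distinct cyclic gap lengths of the configuration `{0α}, …, {(N-1)α}`. -/
noncomputable def gapSet (α : ℝ) (N : ℕ) : Finset ℝ :=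
  (Finset.range N).image (gapAt α N)

/-- The multiset of cyclic gaps of the configuration `{0α}, …, {(N-1)α}`. -/
noncomputable def gapMult (α : ℝ) (N : ℕ) : Multiset ℝ :=
  (Multiset.range N).map (gapAt α N)

/-- Cyclic extension of the ordering permutation `u` to integer indices, mod `N`. -/
def uc (N : ℕ) (u : ℕ → ℕ) (j : ℤ) : ℕ := u ((j % (N : ℤ)).toNat)

open Int

theorem Int.fract_add_eq_or {R : Type*} [Ring R] [LinearOrder R] [IsOrderedRing R] [FloorRing R]
    (a b : R) : fract (a + b) = fract a + fract b ∨ fract (a + b) = fract a + fract b - 1 := by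
  rcases lt_or_ge (fract a + fract b) 1 with h | h
  · refine .inl (fract_eq_iff.2 ⟨add_nonneg (fract_nonneg a) (fract_nonneg b), h, ⌊a⌋ + ⌊b⌋, ?_⟩)
    push_cast; unfold fract; abel
  · refine .inr (fract_eq_iff.2 ⟨sub_nonneg.2 h, ?_, ⌊a⌋ + ⌊b⌋ + 1, ?_⟩)
    · rw [sub_lt_iff_lt_add]
      exact add_lt_add (fract_lt_one a) (fract_lt_one b)
    · push_cast; unfold fract; abel

namespace Irrational

variable {α : ℝ}

theorem fract_natCast_mul_pos (hα : Irrational α) {n : ℕ} (hn : n ≠ 0) : 0 < fract (n * α) :=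
  fract_pos.2 ((hα.natCast_mul hn).ne_int _)

theorem fract_natCast_mul_injective (hα : Irrational α) :
    Function.Injective fun n : ℕ => fract (n * α) := by
  intro m n h
  obtain ⟨z, hz⟩ := fract_eq_fract.1 h
  by_contra hmn
  have hsub : ((m : ℤ) - n : ℤ) ≠ 0 := sub_ne_zero.2 (by exact_mod_cast hmn)
  exact (hα.intCast_mul hsub).ne_int z (by push_cast; linarith)

end Irrational

section FractNatMul

variable {α : ℝ}

theorem fract_natCast_add_mul_eq_or (α : ℝ) (m n : ℕ) :
    fract (((m + n : ℕ) : ℝ) * α) = fract (m * α) + fract (n * α) ∨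
      fract (((m + n : ℕ) : ℝ) * α) = fract (m * α) + fract (n * α) - 1 := by
  rw [Nat.cast_add, add_mul]
  exact fract_add_eq_or _ _

theorem fract_natCast_add_mul_sub (α : ℝ) (m k : ℕ) :
    fract (((m + k : ℕ) : ℝ) * α - m * α) = fract (k * α) := by
  push_cast; ring_nf

theorem fract_natCast_mul_sub_add (hα : Irrational α) (m : ℕ) {k : ℕ} (hk : k ≠ 0) :
    fract ((m : ℝ) * α - ((m + k : ℕ) : ℝ) * α) = 1 - fract (k * α) := by
  rw [← fract_neg (hα.fract_natCast_mul_pos hk).ne']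
  push_cast; ring_nf

end FractNatMul

section FractMinMax

variable {α : ℝ}

def IsFractMinMax (α : ℝ) (N a b : ℕ) : Prop :=
  ∀ n, 0 < n → n < N → fract (a * α) ≤ fract (n * α) ∧ fract (n * α) ≤ fract (b * α)

namespace IsFractMinMax

variable {N a b : ℕ}

theorem le_add (hα : Irrational α) (h : IsFractMinMax α N a b) (ha : 0 < a) : N ≤ a + b := by
  by_contra! hab
  have hδ := hα.fract_natCast_mul_pos ha.ne'
  have := h (a + b) (by omega) hab
  rcases fract_natCast_add_mul_eq_or α a b with e | e <;> linarith [fract_lt_one ((b : ℝ) * α)]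

theorem extend (hα : Irrational α) (h : IsFractMinMax α N a b) (haN : a < N) (hbN : b < N) :
    IsFractMinMax α (a + b) a b := by
  intro n hn hnab
  rcases lt_or_ge n N with hnN | hNn
  · exact h n hn hnN
  have ⟨hla, hua⟩ := h (n - a) (by omega) (by omega)
  have ⟨hlb, hub⟩ := h (n - b) (by omega) (by omega)
  have hne : fract (((n - b : ℕ) : ℝ) * α) ≠ fract (a * α) :=
    hα.fract_natCast_mul_injective.ne (by omega)
  have ea := fract_natCast_add_mul_eq_or α (n - a) a
  have eb := fract_natCast_add_mul_eq_or α (n - b) b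
  rw [Nat.sub_add_cancel (by omega)] at ea eb
  have := fract_lt_one (((n - a : ℕ) : ℝ) * α)
  have := fract_lt_one (((n - b : ℕ) : ℝ) * α)
  have := fract_nonneg ((a : ℝ) * α)
  -- `{nα}` is `{(n-a)α} + {aα}` or one less, and likewise with `b`; a value outside
  -- `[{aα}, {bα}]` would force `{(n-b)α} = {aα}`.
  rcases lt_or_gt_of_ne hne with hlt | hgt <;> rcases ea with ea | ea <;> rcases eb with eb | eb <;>
    constructor <;> linarith

end IsFractMinMax

theorem exists_isFractMinMax (hα : Irrational α) {N : ℕ} (hN : 1 < N) :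
    ∃ a b, 0 < a ∧ 0 < b ∧ N ≤ a + b ∧ IsFractMinMax α (a + b) a b := by
  have hne : (Finset.Ioo 0 N).Nonempty := ⟨1, Finset.mem_Ioo.2 ⟨one_pos, hN⟩⟩
  obtain ⟨a, ha, hmin⟩ := (Finset.Ioo 0 N).exists_min_image (fun n : ℕ => fract (n * α)) hne
  obtain ⟨b, hb, hmax⟩ := (Finset.Ioo 0 N).exists_max_image (fun n : ℕ => fract (n * α)) hne
  rw [Finset.mem_Ioo] at ha hb
  have h : IsFractMinMax α N a b := fun n hn hnN =>
    ⟨hmin n (Finset.mem_Ioo.2 ⟨hn, hnN⟩), hmax n (Finset.mem_Ioo.2 ⟨hn, hnN⟩)⟩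
  exact ⟨a, b, ha.1, hb.1, h.le_add hα ha.1, h.extend hα ha.2 hb.2⟩

end FractMinMax

section Gaps

variable {α : ℝ}

theorem gapAt_eq (hα : Irrational α) {N m : ℕ} {g : ℝ} (hg : 0 < g)
    (hmem : ∃ m' < N, fract ((m' : ℝ) * α - m * α) = g)
    (hfwd : ∀ k, 0 < k → m + k < N → g ≤ fract (k * α))
    (hbwd : ∀ k, 0 < k → k ≤ m → g ≤ 1 - fract (k * α)) : gapAt α N m = g := by
  refine IsLeast.csInf_eq ⟨⟨hg, hmem⟩, ?_⟩
  rintro d ⟨hd, m', hm', rfl⟩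
  rcases le_total m m' with hle | hle
  · obtain ⟨k, rfl⟩ := Nat.exists_eq_add_of_le hle
    rw [fract_natCast_add_mul_sub] at hd ⊢
    exact hfwd k (Nat.pos_of_ne_zero (by rintro rfl; simp at hd)) hm'
  · obtain ⟨k, rfl⟩ := Nat.exists_eq_add_of_le hle
    have hk : k ≠ 0 := by rintro rfl; simp at hd
    rw [fract_natCast_mul_sub_add hα m' hk]
    exact hbwd k (Nat.pos_of_ne_zero hk) (by omega)

variable {a b m : ℕ}

theorem gapAt_add_of_lt (hα : Irrational α) (h : IsFractMinMax α (a + b) a b) (ha : 0 < a)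
    (hm : m < b) : gapAt α (a + b) m = fract (a * α) := by
  refine gapAt_eq hα (hα.fract_natCast_mul_pos ha.ne')
    ⟨m + a, by omega, fract_natCast_add_mul_sub α m a⟩ (fun k hk hmk => (h k hk (by omega)).1)
    fun k hk hkm => ?_
  have := (h (k + a) (by omega) (by omega)).1
  rcases fract_natCast_add_mul_eq_or α k a with e | e <;>
    linarith [fract_lt_one ((k : ℝ) * α), fract_lt_one (((k + a : ℕ) : ℝ) * α)]

theorem gapAt_add_of_le (hα : Irrational α) (h : IsFractMinMax α (a + b) a b) (hb : 0 < b)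
    (hbm : b ≤ m) (hm : m < a + b) : gapAt α (a + b) m = 1 - fract (b * α) := by
  obtain ⟨m, rfl⟩ := Nat.exists_eq_add_of_le' hbm
  refine gapAt_eq hα (sub_pos.2 (fract_lt_one _))
    ⟨m, by omega, fract_natCast_mul_sub_add hα m hb.ne'⟩ (fun k hk hmk => ?_)
    fun k hk hkm => sub_le_sub_left (h k hk (by omega)).2 1
  have := (h (k + b) (by omega) (by omega)).2
  rcases fract_natCast_add_mul_eq_or α k b with e | e <;>
    linarith [hα.fract_natCast_mul_pos hk.ne', fract_nonneg (((k + b : ℕ) : ℝ) * α)]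

theorem card_gapSet_add_eq_two (hα : Irrational α) (h : IsFractMinMax α (a + b) a b)
    (ha : 0 < a) (hb : 0 < b) : (gapSet α (a + b)).card = 2 := by
  classical
  refine Finset.card_eq_two.2 ⟨fract (a * α), 1 - fract (b * α), fun heq => ?_, ?_⟩
  · have := hα.fract_natCast_mul_pos (show a + b ≠ 0 by omega)
    rcases fract_natCast_add_mul_eq_or α a b with e | e <;>
      linarith [fract_lt_one (((a + b : ℕ) : ℝ) * α)]
  ext d
  simp only [gapSet, Finset.mem_image, Finset.mem_range, Finset.mem_insert, Finset.mem_singleton]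
  constructor
  · rintro ⟨m, hm, rfl⟩
    rcases lt_or_ge m b with hmb | hbm
    · exact .inl (gapAt_add_of_lt hα h ha hmb)
    · exact .inr (gapAt_add_of_le hα h hb hbm hm)
  · rintro (rfl | rfl)
    · exact ⟨0, by omega, gapAt_add_of_lt hα h ha hb⟩
    · exact ⟨b, by omega, gapAt_add_of_le hα h hb le_rfl (by omega)⟩

end Gaps

theorem infinitely_many_relabeling_times (α : ℝ) (hα : Irrational α) :
    {N : ℕ | (gapSet α N).card = 2}.Infinite := by
  refine Set.infinite_of_forall_exists_gt fun N => ?_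
  obtain ⟨a, b, ha, hb, hN, h⟩ := exists_isFractMinMax hα (show 1 < N + 2 by omega)
  exact ⟨a + b, card_gapSet_add_eq_two hα h ha hb, by omega⟩
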